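/- Let T = {t_1, …, t_m} be a tree ensemble with m odd and ψ_p(T) > 2k, and let x ∈ ℝ^d be an instance with true label y. For each tree t ∈ T that admits some attack within budget k (i.e., some δ with ‖δ‖_p ≤ k and t(x + δ) ≠ y), let Δ_t denote the minimum L_p norm of such an attack. Then T is robust on x for the attacker A_{p,k} if and only if T(x) = y and there is no subset S ⊆ T with |S| = (m−1)/2 + 1 such that every tree in S admits an attack within budget k and ⊕_{t ∈ S} Δ_t ≤ k. -/

import Mathlib

open scoped Classical

/-- The kinds of norms considered: `L0` (number of nonzero components),
`Lp` for an integer `p ≥ 1` (represented by a positive natural), and `L∞`. -/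
inductive PNorm : Type where
  | L0 : PNorm
  | Lp : ℕ+ → PNorm
  | Linf : PNorm

/-- The `p`-norm of a vector `δ ∈ ℝ^d`: for `L0`, the number of nonzero components;
for `Lp` with integer `p ≥ 1`, `(∑ i, |δ i| ^ p) ^ (1/p)`; for `L∞`, `max_i |δ i|`. -/
noncomputable def pnorm {d : ℕ} (p : PNorm) (δ : Fin d → ℝ) : ℝ :=
  match p with
  | .L0 => ((Finset.univ.filter fun i => δ i ≠ 0).card : ℝ)
  | .Lp n => (∑ i, |δ i| ^ (n : ℕ)) ^ (((n : ℕ) : ℝ)⁻¹)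
  | .Linf => ⨆ i, |δ i|

/-- The corresponding norm on scalars: for `L0`, `0` if the scalar is `0` and `1`
otherwise; for `Lp` and `L∞`, the absolute value. -/
noncomputable def scalarNorm (p : PNorm) (a : ℝ) : ℝ :=
  match p with
  | .L0 => if a = 0 then 0 else 1
  | _ => |a|

/-- A binary decision tree over `ℝ^d` with labels in `{+1, -1}` (encoded as `Bool`,
`true` for `+1` and `false` for `-1`). -/
inductive DTree (d : ℕ) : Type where
  | leaf (y : Bool) : DTree d
  | node (f : Fin d) (v : ℝ) (tl tr : DTree d) : DTree d

/-- The prediction of a decision tree on `x ∈ ℝ^d`: at `σ(f, v, tl, tr)` descend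
into `tl` if `x f ≤ v` and into `tr` otherwise; at a leaf, return its label. -/
noncomputable def DTree.pred {d : ℕ} : DTree d → (Fin d → ℝ) → Bool
  | .leaf y, _ => y
  | .node f v tl tr, x => if x f ≤ v then tl.pred x else tr.pred x

/-- `t.hasNode f v` holds iff `t` contains an internal node `σ(f, v)` testing
feature `f` with threshold `v`. -/
def DTree.hasNode {d : ℕ} : DTree d → Fin d → ℝ → Prop
  | .leaf _, _, _ => False
  | .node f v tl tr, f', v' => (f = f' ∧ v = v') ∨ tl.hasNode f' v' ∨ tr.hasNode f' v'

/-- The attacker `A_{p,k}` maps `x ∈ ℝ^d` to the set of its adversarial manipulations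
`A_{p,k}(x) = {z : ‖z − x‖_p ≤ k}`. -/
def attacker {d : ℕ} (p : PNorm) (k : ℝ) (x : Fin d → ℝ) : Set (Fin d → ℝ) :=
  {z | pnorm p (z - x) ≤ k}

/-- The large-spread condition `ψ_p(T) > 2k`: for every two internal nodes `σ(f, v)`
and `σ(f, v')` testing the same feature `f` in two distinct trees of `T`, the scalar
norm `‖v − v'‖_p` exceeds `2k`. -/
def LargeSpread {d : ℕ} (p : PNorm) (k : ℝ) (T : Finset (DTree d)) : Prop :=
  ∀ t ∈ T, ∀ t' ∈ T, t ≠ t' →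
    ∀ f v v', t.hasNode f v → t'.hasNode f v' → 2 * k < scalarNorm p (v - v')

/-- The support of `δ ∈ ℝ^d`: the set of coordinates where `δ` is nonzero. -/
def supp {d : ℕ} (δ : Fin d → ℝ) : Set (Fin d) := {i | δ i ≠ 0}

/-- `δ` is a minimal attack against the tree `t` on the instance `x` with label `y`
and budget `k`: `δ` has minimum `L_p` norm among all `δ'` with `‖δ'‖_p ≤ k` and
`t(x + δ') ≠ y`. -/
def MinimalAttack {d : ℕ} (p : PNorm) (k : ℝ) (t : DTree d) (x : Fin d → ℝ)
    (y : Bool) (δ : Fin d → ℝ) : Prop :=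
  pnorm p δ ≤ k ∧ t.pred (x + δ) ≠ y ∧
    ∀ δ' : Fin d → ℝ, pnorm p δ' ≤ k → t.pred (x + δ') ≠ y → pnorm p δ ≤ pnorm p δ'

/-- A classifier `g` is stable on `x` for the attacker `A` iff `g z = g x` for
all `z ∈ A x`. -/
def Stable {d : ℕ} (g : (Fin d → ℝ) → Bool) (A : (Fin d → ℝ) → Set (Fin d → ℝ))
    (x : Fin d → ℝ) : Prop :=
  ∀ z ∈ A x, g z = g x

/-- A classifier `g` is robust on `x` (with true label `y`) for the attacker `A`
iff `g x = y` and `g` is stable on `x` for `A`. -/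
def Robust {d : ℕ} (g : (Fin d → ℝ) → Bool) (A : (Fin d → ℝ) → Set (Fin d → ℝ))
    (x : Fin d → ℝ) (y : Bool) : Prop :=
  g x = y ∧ Stable g A x

/-- The prediction of a tree ensemble `T` (a finite set of decision trees, with an odd
number of trees) on `x`, by majority voting over the individual tree predictions. -/
noncomputable def ensPred {d : ℕ} (T : Finset (DTree d)) (x : Fin d → ℝ) : Bool :=
  decide (T.card < 2 * (T.filter fun t => t.pred x = true).card)

/-- The combination operator `⊕` on nonnegative reals indexed by a finite set `S`:
`∑` for `L0`, `(∑ Δ_t^p)^(1/p)` for `Lp` with integer `p ≥ 1`, and `max` for `L∞`. -/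
noncomputable def combine {X : Type*} (p : PNorm) (S : Finset X) (Δ : X → ℝ) : ℝ :=
  match p with
  | .L0 => ∑ t ∈ S, Δ t
  | .Lp n => (∑ t ∈ S, Δ t ^ (n : ℕ)) ^ (((n : ℕ) : ℝ)⁻¹)
  | .Linf => S.fold max 0 Δ

namespace Stmt13Aux

variable {d : ℕ}

lemma pnorm_L0_def (δ : Fin d → ℝ) :
    pnorm .L0 δ = ((Finset.univ.filter fun i => δ i ≠ 0).card : ℝ) := rfl

lemma pnorm_Lp_def (n : ℕ+) (δ : Fin d → ℝ) :
    pnorm (.Lp n) δ = (∑ i, |δ i| ^ (n : ℕ)) ^ (((n : ℕ) : ℝ)⁻¹) := rfl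

lemma pnorm_Linf_def (δ : Fin d → ℝ) : pnorm .Linf δ = ⨆ i, |δ i| := rfl

lemma pnorm_nonneg (p : PNorm) (δ : Fin d → ℝ) : 0 ≤ pnorm p δ := by
  cases p with
  | L0 => exact Nat.cast_nonneg _
  | Lp n => exact Real.rpow_nonneg (Finset.sum_nonneg fun i _ => by positivity) _
  | Linf => exact Real.iSup_nonneg fun i => abs_nonneg _

lemma pnorm_Lp_pow (n : ℕ+) (δ : Fin d → ℝ) :
    (pnorm (.Lp n) δ) ^ (n : ℕ) = ∑ i, |δ i| ^ (n : ℕ) := by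
  rw [pnorm_Lp_def]
  exact Real.rpow_inv_natCast_pow (Finset.sum_nonneg fun i _ => by positivity) n.pos.ne'

lemma abs_le_pnorm_Lp (n : ℕ+) (δ : Fin d → ℝ) (f : Fin d) : |δ f| ≤ pnorm (.Lp n) δ := by
  have h1 : |δ f| = (|δ f| ^ (n : ℕ)) ^ (((n : ℕ) : ℝ)⁻¹) :=
    (Real.pow_rpow_inv_natCast (abs_nonneg _) n.pos.ne').symm
  rw [h1, pnorm_Lp_def]
  exact Real.rpow_le_rpow (by positivity)
    (Finset.single_le_sum (f := fun i => |δ i| ^ (n : ℕ))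
      (fun i _ => by positivity) (Finset.mem_univ f)) (by positivity)

lemma abs_le_pnorm_Linf (δ : Fin d → ℝ) (f : Fin d) : |δ f| ≤ pnorm .Linf δ := by
  rw [pnorm_Linf_def]
  exact le_ciSup (Set.Finite.bddAbove (Set.finite_range fun i => |δ i|)) f

lemma one_le_pnorm_L0 {δ : Fin d → ℝ} {f : Fin d} (h : δ f ≠ 0) : 1 ≤ pnorm .L0 δ := by
  rw [pnorm_L0_def]
  have : 0 < (Finset.univ.filter fun i => δ i ≠ 0).card :=
    Finset.card_pos.2 ⟨f, Finset.mem_filter.2 ⟨Finset.mem_univ f, h⟩⟩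
  exact_mod_cast this

lemma flip_bound {a v s : ℝ} (h : ¬ ((a ≤ v) ↔ (a + s ≤ v))) : |v - a| ≤ |s| ∧ s ≠ 0 := by
  rcases le_or_gt a v with h1 | h1 <;> rcases le_or_gt (a + s) v with h2 | h2
  · exact absurd (iff_of_true h1 h2) h
  · have hs : 0 < s := by linarith
    exact ⟨by rw [abs_of_nonneg (by linarith), abs_of_pos hs]; linarith, by linarith⟩
  · have hs : s < 0 := by linarith
    exact ⟨by rw [abs_of_neg (by linarith), abs_of_neg hs]; linarith, by linarith⟩
  · exact absurd (iff_of_false (by linarith) (by linarith)) h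

lemma no_shared (p : PNorm) {k : ℝ} (hk : 0 ≤ k) {v v' : ℝ}
    (hspread : 2 * k < scalarNorm p (v - v'))
    {δ δ' : Fin d → ℝ} (hδ : pnorm p δ ≤ k) (hδ' : pnorm p δ' ≤ k)
    {f : Fin d} {a : ℝ}
    (h1 : ¬ ((a ≤ v) ↔ (a + δ f ≤ v)))
    (h2 : ¬ ((a ≤ v') ↔ (a + δ' f ≤ v'))) : False := by
  obtain ⟨hb1, hs1⟩ := flip_bound h1
  obtain ⟨hb2, hs2⟩ := flip_bound h2
  have hvv : |v - v'| ≤ |δ f| + |δ' f| := by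
    calc |v - v'| ≤ |v - a| + |a - v'| := abs_sub_le _ _ _
    _ ≤ |δ f| + |δ' f| := by rw [abs_sub_comm a v']; exact add_le_add hb1 hb2
  cases p with
  | L0 =>
    have e1 : (1 : ℝ) ≤ k := le_trans (one_le_pnorm_L0 hs1) hδ
    have : scalarNorm PNorm.L0 (v - v') ≤ 1 := by
      simp only [scalarNorm]; split <;> norm_num
    linarith
  | Lp n =>
    have e1 : |δ f| ≤ k := le_trans (abs_le_pnorm_Lp n δ f) hδ
    have e2 : |δ' f| ≤ k := le_trans (abs_le_pnorm_Lp n δ' f) hδ'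
    have : scalarNorm (PNorm.Lp n) (v - v') = |v - v'| := rfl
    linarith [this ▸ hspread]
  | Linf =>
    have e1 : |δ f| ≤ k := le_trans (abs_le_pnorm_Linf δ f) hδ
    have e2 : |δ' f| ≤ k := le_trans (abs_le_pnorm_Linf δ' f) hδ'
    have : scalarNorm PNorm.Linf (v - v') = |v - v'| := rfl
    linarith [this ▸ hspread]

lemma pred_eq_of_agree (t : DTree d) (z w : Fin d → ℝ)
    (h : ∀ f v, t.hasNode f v → ((z f ≤ v) ↔ (w f ≤ v))) : t.pred z = t.pred w := by
  induction t with
  | leaf y => rfl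
  | node f v tl tr ihl ihr =>
    have hr := h f v (Or.inl ⟨rfl, rfl⟩)
    simp only [DTree.pred]
    by_cases hz : z f ≤ v
    · rw [if_pos hz, if_pos (hr.mp hz),
        ihl (fun f' v' hn => h f' v' (Or.inr (Or.inl hn)))]
    · rw [if_neg hz, if_neg (fun hw => hz (hr.mpr hw)),
        ihr (fun f' v' hn => h f' v' (Or.inr (Or.inr hn)))]

/-- Restriction of a vector to a set of coordinates. -/
noncomputable def restr (δ : Fin d → ℝ) (R : Set (Fin d)) : Fin d → ℝ :=
  fun f => if f ∈ R then δ f else 0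

lemma restr_ne_zero_iff (δ : Fin d → ℝ) (R : Set (Fin d)) (f : Fin d) :
    restr δ R f ≠ 0 ↔ f ∈ R ∧ δ f ≠ 0 := by
  unfold restr; split_ifs with h <;> simp [h]

lemma pnorm_restr_le (p : PNorm) (δ : Fin d → ℝ) (R : Set (Fin d)) :
    pnorm p (restr δ R) ≤ pnorm p δ := by
  cases p with
  | L0 =>
    rw [pnorm_L0_def, pnorm_L0_def]
    have : (Finset.univ.filter fun i => restr δ R i ≠ 0) ⊆
        (Finset.univ.filter fun i => δ i ≠ 0) := by
      intro i hi
      rw [Finset.mem_filter] at hi ⊢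
      exact ⟨hi.1, ((restr_ne_zero_iff δ R i).1 hi.2).2⟩
    exact_mod_cast Finset.card_le_card this
  | Lp n =>
    rw [pnorm_Lp_def, pnorm_Lp_def]
    refine Real.rpow_le_rpow (Finset.sum_nonneg fun i _ => by positivity)
      (Finset.sum_le_sum fun i _ => ?_) (by positivity)
    refine pow_le_pow_left₀ (abs_nonneg _) ?_ _
    unfold restr; split_ifs <;> simp
  | Linf =>
    refine Real.iSup_le (fun i => ?_) (pnorm_nonneg _ _)
    refine le_trans ?_ (abs_le_pnorm_Linf δ i)
    unfold restr; split_ifs <;> simp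

end Stmt13Aux

namespace Stmt13Aux

variable {d : ℕ}

lemma sum_cases {X : Type*} (S : Finset X) (g : X → ℝ)
    (hdisj : ∀ t ∈ S, ∀ s ∈ S, t ≠ s → g t ≠ 0 → g s ≠ 0 → False) :
    (∑ t ∈ S, g t) = 0 ∨ ∃ t ∈ S, (∑ t ∈ S, g t) = g t ∧ g t ≠ 0 := by
  by_cases hex : ∃ t ∈ S, g t ≠ 0
  · obtain ⟨t, ht, hgt⟩ := hex
    refine Or.inr ⟨t, ht, ?_, hgt⟩
    refine Finset.sum_eq_single_of_mem t ht (fun s hs hst => ?_)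
    by_contra hgs
    exact hdisj s hs t ht hst hgs hgt
  · push_neg at hex
    exact Or.inl (Finset.sum_eq_zero hex)

lemma combine_le_pnorm (p : PNorm) {X : Type*} (S : Finset X) (Δ : X → ℝ) (δ : Fin d → ℝ)
    (R : X → Set (Fin d))
    (hdisj : ∀ t ∈ S, ∀ s ∈ S, t ≠ s → ∀ f, f ∈ R t → f ∈ R s → False)
    (hΔ0 : ∀ t ∈ S, 0 ≤ Δ t)
    (hle : ∀ t ∈ S, Δ t ≤ pnorm p (restr δ (R t))) :
    combine p S Δ ≤ pnorm p δ := by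
  have hAdisj : ∀ t ∈ S, ∀ s ∈ S, t ≠ s →
      Disjoint (Finset.univ.filter fun f => restr δ (R t) f ≠ 0)
        (Finset.univ.filter fun f => restr δ (R s) f ≠ 0) := by
    intro t ht s hs hts
    rw [Finset.disjoint_left]
    intro f hf hf'
    rw [Finset.mem_filter, restr_ne_zero_iff] at hf hf'
    exact hdisj t ht s hs hts f hf.2.1 hf'.2.1
  cases p with
  | L0 =>
    show (∑ t ∈ S, Δ t) ≤ _
    calc ∑ t ∈ S, Δ t ≤ ∑ t ∈ S, pnorm .L0 (restr δ (R t)) := Finset.sum_le_sum hle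
    _ = ((∑ t ∈ S, (Finset.univ.filter fun f => restr δ (R t) f ≠ 0).card : ℕ) : ℝ) := by
        push_cast; rfl
    _ = ((S.biUnion fun t => Finset.univ.filter fun f => restr δ (R t) f ≠ 0).card : ℝ) := by
        rw [Finset.card_biUnion hAdisj]
    _ ≤ pnorm .L0 δ := by
        rw [pnorm_L0_def]
        refine Nat.cast_le.2 (Finset.card_le_card ?_)
        intro f hf
        rw [Finset.mem_biUnion] at hf
        obtain ⟨t, _, hf⟩ := hf
        rw [Finset.mem_filter, restr_ne_zero_iff] at hf
        exact Finset.mem_filter.2 ⟨Finset.mem_univ f, hf.2.2⟩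
  | Lp n =>
    show (∑ t ∈ S, Δ t ^ (n : ℕ)) ^ (((n : ℕ) : ℝ)⁻¹) ≤ _
    rw [pnorm_Lp_def]
    refine Real.rpow_le_rpow (Finset.sum_nonneg fun t ht => pow_nonneg (hΔ0 t ht) _) ?_ (by positivity)
    calc ∑ t ∈ S, Δ t ^ (n : ℕ)
        ≤ ∑ t ∈ S, ∑ f, |restr δ (R t) f| ^ (n : ℕ) := by
          refine Finset.sum_le_sum fun t ht => ?_
          rw [← pnorm_Lp_pow]
          exact pow_le_pow_left₀ (hΔ0 t ht) (hle t ht) _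
    _ = ∑ f, ∑ t ∈ S, |restr δ (R t) f| ^ (n : ℕ) := Finset.sum_comm
    _ ≤ ∑ f, |δ f| ^ (n : ℕ) := by
          refine Finset.sum_le_sum fun f _ => ?_
          have hside : ∀ t ∈ S, ∀ s ∈ S, t ≠ s → |restr δ (R t) f| ^ (n : ℕ) ≠ 0 →
              |restr δ (R s) f| ^ (n : ℕ) ≠ 0 → False := by
            intro t ht s hs hts h1 h2
            have w1 : restr δ (R t) f ≠ 0 := fun h0 => h1 (by rw [h0]; simp [zero_pow n.pos.ne'])
            have w2 : restr δ (R s) f ≠ 0 := fun h0 => h2 (by rw [h0]; simp [zero_pow n.pos.ne'])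
            rw [restr_ne_zero_iff] at w1 w2
            exact hdisj t ht s hs hts f w1.1 w2.1
          rcases sum_cases S (fun t => |restr δ (R t) f| ^ (n : ℕ)) hside
            with h | ⟨t, ht, he, hne⟩
          · rw [h]; positivity
          · rw [he]
            refine pow_le_pow_left₀ (abs_nonneg _) ?_ _
            unfold restr; split_ifs <;> simp
  | Linf =>
    show S.fold max 0 Δ ≤ _
    rw [Finset.fold_max_le]
    exact ⟨pnorm_nonneg _ _, fun t ht =>
      le_trans (hle t ht) (pnorm_restr_le _ _ _)⟩

lemma pnorm_sum_le (p : PNorm) {X : Type*} (S : Finset X) (Δ : X → ℝ) (δ : X → Fin d → ℝ)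
    (hdisj : ∀ t ∈ S, ∀ s ∈ S, t ≠ s → ∀ f, δ t f ≠ 0 → δ s f ≠ 0 → False)
    (hΔ0 : ∀ t ∈ S, 0 ≤ Δ t)
    (hle : ∀ t ∈ S, pnorm p (δ t) ≤ Δ t) :
    pnorm p (fun f => ∑ t ∈ S, δ t f) ≤ combine p S Δ := by
  cases p with
  | L0 =>
    show _ ≤ ∑ t ∈ S, Δ t
    calc pnorm .L0 (fun f => ∑ t ∈ S, δ t f)
        ≤ ((S.biUnion fun t => Finset.univ.filter fun f => δ t f ≠ 0).card : ℝ) := by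
          rw [pnorm_L0_def]
          refine Nat.cast_le.2 (Finset.card_le_card ?_)
          intro f hf
          rw [Finset.mem_filter] at hf
          have : ∃ t ∈ S, δ t f ≠ 0 := by
            by_contra hall
            push_neg at hall
            exact hf.2 (Finset.sum_eq_zero hall)
          obtain ⟨t, ht, hne⟩ := this
          exact Finset.mem_biUnion.2 ⟨t, ht, Finset.mem_filter.2 ⟨Finset.mem_univ f, hne⟩⟩
    _ ≤ ((∑ t ∈ S, (Finset.univ.filter fun f => δ t f ≠ 0).card : ℕ) : ℝ) :=
          Nat.cast_le.2 (Finset.card_biUnion_le)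
    _ = ∑ t ∈ S, pnorm .L0 (δ t) := by push_cast; rfl
    _ ≤ ∑ t ∈ S, Δ t := Finset.sum_le_sum hle
  | Lp n =>
    show _ ≤ (∑ t ∈ S, Δ t ^ (n : ℕ)) ^ (((n : ℕ) : ℝ)⁻¹)
    rw [pnorm_Lp_def]
    refine Real.rpow_le_rpow (Finset.sum_nonneg fun f _ => by positivity) ?_ (by positivity)
    calc ∑ f, |∑ t ∈ S, δ t f| ^ (n : ℕ)
        ≤ ∑ f, ∑ t ∈ S, |δ t f| ^ (n : ℕ) := by
          refine Finset.sum_le_sum fun f _ => ?_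
          rcases sum_cases S (fun t => δ t f) (fun t ht s hs hts => hdisj t ht s hs hts f)
            with h | ⟨t, ht, he, hne⟩
          · rw [h]; simp only [abs_zero, zero_pow n.pos.ne']
            exact Finset.sum_nonneg fun t _ => by positivity
          · rw [he]
            exact Finset.single_le_sum (f := fun t => |δ t f| ^ (n : ℕ))
              (fun t _ => by positivity) ht
    _ = ∑ t ∈ S, ∑ f, |δ t f| ^ (n : ℕ) := Finset.sum_comm
    _ ≤ ∑ t ∈ S, Δ t ^ (n : ℕ) := by
          refine Finset.sum_le_sum fun t ht => ?_
          rw [← pnorm_Lp_pow]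
          exact pow_le_pow_left₀ (pnorm_nonneg _ _) (hle t ht) _
  | Linf =>
    show _ ≤ S.fold max 0 Δ
    have hfold0 : (0 : ℝ) ≤ S.fold max 0 Δ := (Finset.le_fold_max 0).2 (Or.inl le_rfl)
    rw [pnorm_Linf_def]
    refine Real.iSup_le (fun f => ?_) hfold0
    rcases sum_cases S (fun t => δ t f) (fun t ht s hs hts => hdisj t ht s hs hts f)
      with h | ⟨t, ht, he, hne⟩
    · rw [h]; simpa using hfold0
    · rw [he]
      refine le_trans (le_trans (abs_le_pnorm_Linf (δ t) f) (hle t ht)) ?_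
      exact (Finset.le_fold_max _).2 (Or.inr ⟨t, ht, le_rfl⟩)

end Stmt13Aux

namespace Stmt13Aux

variable {d : ℕ}

lemma ens_ne_iff (T : Finset (DTree d)) (hodd : Odd T.card) (z : Fin d → ℝ) (y : Bool) :
    ensPred T z ≠ y ↔ (T.card - 1) / 2 + 1 ≤ (T.filter fun t => t.pred z ≠ y).card := by
  obtain ⟨j, hj⟩ := hodd
  have hpart : (T.filter fun t => t.pred z = true).card +
      (T.filter fun t => ¬(t.pred z = true)).card = T.card :=
    Finset.card_filter_add_card_filter_not _
  cases y with
  | true =>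
    have heq : (T.filter fun t => t.pred z ≠ true) =
        (T.filter fun t => ¬(t.pred z = true)) := rfl
    rw [heq]
    have : ensPred T z ≠ true ↔ ¬(T.card < 2 * (T.filter fun t => t.pred z = true).card) := by
      simp [ensPred]
    rw [this]
    omega
  | false =>
    have heq : (T.filter fun t => t.pred z ≠ false) =
        (T.filter fun t => t.pred z = true) := by
      apply Finset.filter_congr
      intro t _
      simp
    rw [heq]
    have : ensPred T z ≠ false ↔ (T.card < 2 * (T.filter fun t => t.pred z = true).card) := by
      simp [ensPred]
    rw [this]
    omega
end Stmt13Aux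

open Stmt13Aux

/-- Let `T` be a tree ensemble with an odd number `m` of trees and `ψ_p(T) > 2k`, and
let `x` be an instance with true label `y`. For every tree `t ∈ T` that admits some
attack within budget `k` (some `δ` with `‖δ‖_p ≤ k` and `t (x + δ) ≠ y`), let `Δ t` be
the minimum `L_p` norm of such an attack. Then `T` is robust on `x` for the attacker
`A_{p,k}` if and only if `T(x) = y` and there is no subset `S ⊆ T` with
`|S| = (m−1)/2 + 1` such that every tree in `S` admits an attack within budget `k` and
`⊕_{t ∈ S} Δ t ≤ k`. -/
theorem stmt13 {d : ℕ} (p : PNorm) (k : ℝ) (hk : 0 ≤ k)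
    (T : Finset (DTree d)) (hodd : Odd T.card) (hT : LargeSpread p k T)
    (x : Fin d → ℝ) (y : Bool)
    (Δ : DTree d → ℝ)
    (hΔ : ∀ t ∈ T, (∃ δ : Fin d → ℝ, pnorm p δ ≤ k ∧ t.pred (x + δ) ≠ y) →
      IsLeast {c : ℝ | ∃ δ : Fin d → ℝ,
        pnorm p δ ≤ k ∧ t.pred (x + δ) ≠ y ∧ c = pnorm p δ} (Δ t)) :
    Robust (ensPred T) (attacker p k) x y ↔
      (ensPred T x = y ∧
        ¬ ∃ S ⊆ T, S.card = (T.card - 1) / 2 + 1 ∧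
          (∀ t ∈ S, ∃ δ : Fin d → ℝ, pnorm p δ ≤ k ∧ t.pred (x + δ) ≠ y) ∧
          combine p S Δ ≤ k) := by
  constructor
  · rintro ⟨hxy, hstab⟩
    refine ⟨hxy, ?_⟩
    rintro ⟨S, hS, hcard, hatk, hcomb⟩
    have hmem : ∀ t, t ∈ S →
        ∃ δ : Fin d → ℝ, pnorm p δ ≤ k ∧ t.pred (x + δ) ≠ y ∧ Δ t = pnorm p δ :=
      fun t ht => (hΔ t (hS ht) (hatk t ht)).1
    choose! δ₀ hA hB hC using hmem
    set R : DTree d → Set (Fin d) :=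
      fun t => {f | ∃ v, t.hasNode f v ∧ ¬((x f ≤ v) ↔ (x f + δ₀ t f ≤ v))} with hR
    set δ' : DTree d → Fin d → ℝ := fun t => restr (δ₀ t) (R t) with hδ'
    have hdisj : ∀ t ∈ S, ∀ s ∈ S, t ≠ s → ∀ f, f ∈ R t → f ∈ R s → False := by
      intro t ht s hs hts f hf hf'
      obtain ⟨v, hv, hflip⟩ := hf
      obtain ⟨v', hv', hflip'⟩ := hf'
      exact no_shared p hk (hT t (hS ht) s (hS hs) hts f v v' hv hv')
        (hA t ht) (hA s hs) hflip hflip'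
    set g : Fin d → ℝ := fun f => ∑ t ∈ S, δ' t f with hg
    have hdsupp : ∀ t ∈ S, ∀ s ∈ S, t ≠ s → ∀ f, δ' t f ≠ 0 → δ' s f ≠ 0 → False := by
      intro t ht s hs hts f h1 h2
      exact hdisj t ht s hs hts f ((restr_ne_zero_iff _ _ _).1 h1).1
        ((restr_ne_zero_iff _ _ _).1 h2).1
    have hΔ0 : ∀ t ∈ S, 0 ≤ Δ t := fun t ht => (hC t ht) ▸ pnorm_nonneg p (δ₀ t)
    have hδ'le : ∀ t ∈ S, pnorm p (δ' t) ≤ Δ t := fun t ht =>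
      (hC t ht) ▸ pnorm_restr_le p (δ₀ t) (R t)
    have hgnorm : pnorm p g ≤ k := le_trans (pnorm_sum_le p S Δ δ' hdsupp hΔ0 hδ'le) hcomb
    have hG1 : ∀ t ∈ S, ∀ f, f ∈ R t → g f = δ₀ t f := by
      intro t ht f hf
      have hz : ∀ s ∈ S, s ≠ t → δ' s f = 0 := by
        intro s hs hst
        by_contra h0
        exact hdisj s hs t ht hst f ((restr_ne_zero_iff _ _ _).1 h0).1 hf
      calc g f = δ' t f := Finset.sum_eq_single_of_mem t ht hz
      _ = δ₀ t f := if_pos hf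
    have hG2 : ∀ t ∈ S, ∀ f, f ∉ R t →
        g f = 0 ∨ ∃ s ∈ S, s ≠ t ∧ f ∈ R s ∧ g f = δ₀ s f := by
      intro t ht f hf
      rcases sum_cases S (fun s => δ' s f) (fun a ha b hb hab => hdsupp a ha b hb hab f)
        with h | ⟨s, hs, he, hne⟩
      · exact Or.inl h
      · have hfs : f ∈ R s := ((restr_ne_zero_iff _ _ _).1 hne).1
        have hst : s ≠ t := fun e => hf (e ▸ hfs)
        refine Or.inr ⟨s, hs, hst, hfs, ?_⟩
        show (∑ t ∈ S, δ' t f) = δ₀ s f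
        rw [he]
        exact if_pos hfs
    have hpred : ∀ t ∈ S, t.pred (x + g) = t.pred (x + δ₀ t) := by
      intro t ht
      apply pred_eq_of_agree
      intro f v hv
      show (x f + g f ≤ v) ↔ (x f + δ₀ t f ≤ v)
      by_cases hf : f ∈ R t
      · rw [hG1 t ht f hf]
      · have hnoflip : (x f ≤ v) ↔ (x f + δ₀ t f ≤ v) := by
          by_contra hfl
          exact hf ⟨v, hv, hfl⟩
        rcases hG2 t ht f hf with h0 | ⟨s, hs, hst, hfs, he⟩
        · rw [h0, add_zero]; exact hnoflip
        · rw [he]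
          have hns : (x f ≤ v) ↔ (x f + δ₀ s f ≤ v) := by
            by_contra hfl
            obtain ⟨v', hv', hfl'⟩ := hfs
            exact no_shared p hk (hT t (hS ht) s (hS hs) hst.symm f v v' hv hv')
              (hA s hs) (hA s hs) hfl hfl'
          exact hns.symm.trans hnoflip
    have hsub : S ⊆ T.filter fun t => t.pred (x + g) ≠ y := by
      intro t ht
      exact Finset.mem_filter.2 ⟨hS ht, by rw [hpred t ht]; exact hB t ht⟩
    have hge : ensPred T (x + g) ≠ y :=
      (ens_ne_iff T hodd (x + g) y).2 (hcard ▸ Finset.card_le_card hsub)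
    have hmemA : (x + g) ∈ attacker p k x := by
      show pnorm p ((x + g) - x) ≤ k
      have : (x + g) - x = g := by funext f; simp
      rw [this]; exact hgnorm
    exact hge ((hstab (x + g) hmemA).trans hxy)
  · rintro ⟨hxy, hno⟩
    refine ⟨hxy, fun z hz => ?_⟩
    rw [hxy]
    by_contra hne
    have hcard := (ens_ne_iff T hodd z y).1 hne
    obtain ⟨S, hSsub, hScard⟩ := Finset.exists_subset_card_eq hcard
    have hST : ∀ t ∈ S, t ∈ T := fun t ht => (Finset.mem_filter.1 (hSsub ht)).1
    have hSz : ∀ t ∈ S, t.pred z ≠ y := fun t ht => (Finset.mem_filter.1 (hSsub ht)).2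
    have hznorm : pnorm p (z - x) ≤ k := hz
    have hxz : x + (z - x) = z := by funext f; simp
    have hzf : ∀ f : Fin d, x f + (z - x) f = z f := fun f => by simp
    set R : DTree d → Set (Fin d) :=
      fun t => {f | ∃ v, t.hasNode f v ∧ ¬((x f ≤ v) ↔ (x f + (z - x) f ≤ v))} with hR
    have hpredr : ∀ t ∈ S, t.pred (x + restr (z - x) (R t)) = t.pred z := by
      intro t ht
      apply pred_eq_of_agree
      intro f v hv
      show (x f + restr (z - x) (R t) f ≤ v) ↔ (z f ≤ v)
      by_cases hf : f ∈ R t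
      · rw [show restr (z - x) (R t) f = (z - x) f from if_pos hf, hzf f]
      · rw [show restr (z - x) (R t) f = 0 from if_neg hf, add_zero]
        by_contra hfl
        apply hf
        refine ⟨v, hv, ?_⟩
        rw [hzf f]
        exact hfl
    have hnormr : ∀ t : DTree d, pnorm p (restr (z - x) (R t)) ≤ k :=
      fun t => le_trans (pnorm_restr_le p _ _) hznorm
    have hexist : ∀ t ∈ S, ∃ δ : Fin d → ℝ, pnorm p δ ≤ k ∧ t.pred (x + δ) ≠ y :=
      fun t ht => ⟨z - x, hznorm, by rw [hxz]; exact hSz t ht⟩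
    have hL : ∀ t ∈ S, IsLeast {c : ℝ | ∃ δ : Fin d → ℝ,
        pnorm p δ ≤ k ∧ t.pred (x + δ) ≠ y ∧ c = pnorm p δ} (Δ t) :=
      fun t ht => hΔ t (hST t ht) (hexist t ht)
    have hΔ0 : ∀ t ∈ S, 0 ≤ Δ t := by
      intro t ht
      obtain ⟨δm, _, _, he⟩ := (hL t ht).1
      rw [he]; exact pnorm_nonneg p δm
    have hle : ∀ t ∈ S, Δ t ≤ pnorm p (restr (z - x) (R t)) := by
      intro t ht
      exact (hL t ht).2 ⟨restr (z - x) (R t), hnormr t,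
        by rw [hpredr t ht]; exact hSz t ht, rfl⟩
    have hdisj : ∀ t ∈ S, ∀ s ∈ S, t ≠ s → ∀ f, f ∈ R t → f ∈ R s → False := by
      intro t ht s hs hts f hf hf'
      obtain ⟨v, hv, hflip⟩ := hf
      obtain ⟨v', hv', hflip'⟩ := hf'
      exact no_shared p hk (hT t (hST t ht) s (hST s hs) hts f v v' hv hv')
        hznorm hznorm hflip hflip'
    have hcomb : combine p S Δ ≤ k :=
      le_trans (combine_le_pnorm p S Δ (z - x) R hdisj hΔ0 hle) hznorm
    exact hno ⟨S, hST, hScard, hexist, hcomb⟩
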